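/- arXiv:2604.09252 — 4 statements merged into one kernel-verified Lean document; each statement's English description precedes it below -/
import Mathlib

section
/- Let f : ℝⁿ → ℝ be continuously differentiable, h : ℝⁿ → ℝᵐ be twice continuously differentiable, and k_p ≥ 0, k_i > 0, k_d ≥ 0. The constant functions x(t) ≡ x⋆ and λ(t) ≡ λ⋆ form a solution of the PID-CMO dynamics ẋ = −∇f(x) − J_h(x)ᵀλ, λ̇ = k_i h(x) + k_p J_h(x)ẋ + k_d (d/dt)(J_h(x)ẋ) if and only if (x⋆, λ⋆) is a stationary point of the equality-constrained problem, i.e., ∇f(x⋆) + J_h(x⋆)ᵀλ⋆ = 0 and h(x⋆) = 0. -/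
open Matrix

/-- The constant functions `x(t) ≡ x⋆`, `λ(t) ≡ λ⋆` form a solution of the
PID-CMO dynamics `ẋ = −∇f(x) − J_h(x)ᵀλ`,
`λ̇ = k_i h(x) + k_p J_h(x) ẋ + k_d (d/dt)(J_h(x) ẋ)` if and only if `(x⋆, λ⋆)` is a
stationary point, i.e. `∇f(x⋆) + J_h(x⋆)ᵀλ⋆ = 0` and `h(x⋆) = 0`.  Here a solution
consists of the curves together with a derivative `w'` of `t ↦ J_h(x(t)) ẋ(t)`. -/
theorem stmt2 {n m : ℕ}
    (f : EuclideanSpace ℝ (Fin n) → ℝ)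
    (h : EuclideanSpace ℝ (Fin n) → EuclideanSpace ℝ (Fin m))
    (Jh : EuclideanSpace ℝ (Fin n) → Matrix (Fin m) (Fin n) ℝ)
    (hf : ContDiff ℝ 1 f) (hh : ContDiff ℝ 2 h)
    (hJ : ∀ x, HasFDerivAt h
      ((Matrix.toEuclideanLin (Jh x)).toContinuousLinearMap) x)
    (kp ki kd : ℝ) (hkp : 0 ≤ kp) (hki : 0 < ki) (hkd : 0 ≤ kd)
    (xs : EuclideanSpace ℝ (Fin n)) (ls : EuclideanSpace ℝ (Fin m)) :
    -- the constant curves `X t = x⋆`, `Λ t = λ⋆`, whose claimed velocity field is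
    -- `v t = −∇f(X t) − J_h(X t)ᵀ Λ t`,
    (letI X : ℝ → EuclideanSpace ℝ (Fin n) := fun _ => xs
     letI Λ : ℝ → EuclideanSpace ℝ (Fin m) := fun _ => ls
     letI v : ℝ → EuclideanSpace ℝ (Fin n) :=
       fun t => -gradient f (X t) - Matrix.toEuclideanLin (Jh (X t))ᵀ (Λ t)
     -- form a solution of the PID-CMO dynamics:
     (∀ t : ℝ, HasDerivAt X (v t) t) ∧
     ∃ w' : ℝ → EuclideanSpace ℝ (Fin m),
       (∀ t : ℝ, HasDerivAt
          (fun s => Matrix.toEuclideanLin (Jh (X s)) (v s)) (w' t) t) ∧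
       (∀ t : ℝ, HasDerivAt Λ
          (ki • h (X t) + kp • Matrix.toEuclideanLin (Jh (X t)) (v t) + kd • w' t) t))
      ↔ (gradient f xs + Matrix.toEuclideanLin (Jh xs)ᵀ ls = 0 ∧ h xs = 0) := by
  constructor
  · rintro ⟨hX, w', hw', hΛ⟩
    have hv0 : (-gradient f xs - Matrix.toEuclideanLin (Jh xs)ᵀ ls) = 0 :=
      (hX 0).unique (hasDerivAt_const 0 xs)
    have hstat : gradient f xs + Matrix.toEuclideanLin (Jh xs)ᵀ ls = 0 := by
      rwa [neg_sub_left, neg_eq_zero, add_comm] at hv0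
    have hv0' : (-gradient f xs - Matrix.toEuclideanLin (Jh xs)ᵀ ls) = 0 := by
      rw [neg_sub_left, neg_eq_zero, add_comm]; exact hstat
    refine ⟨hstat, ?_⟩
    have hw0 : w' 0 = 0 := by
      exact (hw' 0).unique
        (hasDerivAt_const 0 (Matrix.toEuclideanLin (Jh xs)
          (-gradient f xs - Matrix.toEuclideanLin (Jh xs)ᵀ ls)))
    have hsum := (hΛ 0).unique (hasDerivAt_const 0 ls)
    simp only [hv0', map_zero, smul_zero, hw0, add_zero] at hsum
    rcases smul_eq_zero.mp hsum with hk | h0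
    · exact absurd hk hki.ne'
    · exact h0
  · rintro ⟨hstat, hzero⟩
    have hv0 : (-gradient f xs - Matrix.toEuclideanLin (Jh xs)ᵀ ls) = 0 := by
      rw [neg_sub_left, neg_eq_zero, add_comm]; exact hstat
    refine ⟨fun t => ?_, fun _ => 0, fun t => ?_, fun t => ?_⟩
    · simp only [hv0]; exact hasDerivAt_const t xs
    · exact hasDerivAt_const t _
    · simp only [hzero, hv0, map_zero, smul_zero, add_zero]
      exact hasDerivAt_const t ls
end

section
/- Let f : ℝⁿ → ℝ be continuously differentiable and ρ-strongly convex for some ρ > 0, let A ∈ ℝ^{m×n} satisfy a_min I_m ⪯ AAᵀ for some a_min > 0, and let b ∈ ℝᵐ. Then there exists a unique pair (x⋆, ξ⋆) ∈ ℝⁿ × ℝᵐ satisfying ∇f(x⋆) + Aᵀξ⋆ = 0 and Ax⋆ = b; in particular, the affine PID saddle-point flow has a unique equilibrium, and x⋆ is the unique global minimizer of f over {x : Ax = b}. -/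
/-!
Since `a_min I ⪯ AAᵀ`, the map `Aᵀ` is injective, so `A` is onto and the feasible set
`{x | Ax = b}` is a nonempty closed affine subspace. Strong convexity gives
`f y ≥ f x + ⟪∇f x, y - x⟫ + ρ/2 ‖y - x‖²`, so `f` is coercive and attains its minimum on the
feasible set at some `x⋆`; there `∇f x⋆ ⟂ ker A = (range Aᵀ)ᗮ`, which produces the multiplier
`ξ⋆`. Conversely, at any stationary pair `⟪∇f x, y - x⟫ = -⟪ξ, A (y - x)⟫ = 0` for feasible `y`,
so the same inequality makes `x` the strict minimizer: this pins down `x⋆`, and injectivity of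
`Aᵀ` pins down `ξ⋆`.
-/
open Matrix Set Filter
open scoped RealInnerProductSpace

section Convexity

variable {E : Type*} [NormedAddCommGroup E] [InnerProductSpace ℝ E]

theorem ConvexOn.add_le_of_hasFDerivAt {g : E → ℝ} {g' : E →L[ℝ] ℝ} {x : E}
    (hg : ConvexOn ℝ univ g) (hgx : HasFDerivAt g g' x) (y : E) :
    g x + g' (y - x) ≤ g y := by
  have hline : ConvexOn ℝ univ (fun t : ℝ => g (x + t • (y - x))) := by
    simpa [Function.comp_def, AffineMap.lineMap_apply_module', add_comm]
      using hg.comp_affineMap (AffineMap.lineMap x y : ℝ →ᵃ[ℝ] E)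
  have hpath : HasDerivAt (fun t : ℝ => x + t • (y - x)) (y - x) 0 := by
    simpa using ((hasDerivAt_id (0 : ℝ)).smul_const (y - x)).const_add x
  have hderiv : HasDerivAt (fun t : ℝ => g (x + t • (y - x))) (g' (y - x)) 0 :=
    hgx.comp_hasDerivAt_of_eq 0 hpath (by simp)
  have hslope := hline.le_slope_of_hasDerivAt (mem_univ 0) (mem_univ 1) zero_lt_one hderiv
  simp only [slope_def_field, one_smul, zero_smul, add_zero, sub_zero, div_one, add_sub_cancel]
    at hslope
  linarith

variable [CompleteSpace E]

theorem StrongConvexOn.add_inner_gradient_add_le {f : E → ℝ} {ρ : ℝ} {x : E}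
    (hsc : StrongConvexOn univ ρ f) (hfx : DifferentiableAt ℝ f x) (y : E) :
    f x + ⟪gradient f x, y - x⟫ + ρ / 2 * ‖y - x‖ ^ 2 ≤ f y := by
  have hderiv := hfx.hasFDerivAt.sub ((hasFDerivAt_id x).norm_sq.const_mul (ρ / 2))
  have hfirst := (strongConvexOn_iff_convex.mp hsc).add_le_of_hasFDerivAt hderiv y
  have hnorm : ‖y‖ ^ 2 = ‖x‖ ^ 2 + 2 * ⟪x, y - x⟫ + ‖y - x‖ ^ 2 := by
    rw [← norm_add_sq_real, add_sub_cancel]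
  simp only [id, _root_.sub_apply, _root_.smul_apply, ContinuousLinearMap.comp_id,
    innerSL_apply_apply, smul_eq_mul, nsmul_eq_mul, Nat.cast_ofNat, ← inner_gradient_left, hnorm]
    at hfirst
  linarith

theorem StrongConvexOn.tendsto_cocompact_atTop [ProperSpace E] {f : E → ℝ} {ρ : ℝ} {x₀ : E}
    (hsc : StrongConvexOn univ ρ f) (hρ : 0 < ρ) (hfx : DifferentiableAt ℝ f x₀) :
    Tendsto f (cocompact E) atTop := by
  set G := ‖gradient f x₀‖
  have hquad : Tendsto (fun r : ℝ => f x₀ + r * (ρ / 2 * r - G)) atTop atTop :=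
    tendsto_atTop_add_const_left _ _ (tendsto_id.atTop_mul_atTop₀
      (tendsto_atTop_add_const_right _ _ (tendsto_id.const_mul_atTop (by positivity))))
  refine tendsto_atTop_mono (fun y => ?_) (hquad.comp (tendsto_dist_right_cocompact_atTop x₀))
  have hcs : -(G * ‖y - x₀‖) ≤ ⟪gradient f x₀, y - x₀⟫ :=
    neg_le_of_abs_le (abs_real_inner_le_norm _ _)
  have := hsc.add_inner_gradient_add_le hfx y
  simp only [Function.comp_apply, dist_eq_norm]
  nlinarith

theorem StrongConvexOn.exists_isMinOn [ProperSpace E] {f : E → ℝ} {ρ : ℝ} {s : Set E}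
    (hsc : StrongConvexOn univ ρ f) (hρ : 0 < ρ) (hf : Differentiable ℝ f)
    (hs : IsClosed s) (hne : s.Nonempty) :
    ∃ x ∈ s, IsMinOn f s x := by
  obtain ⟨x₀, hx₀⟩ := hne
  have hlarge := (hsc.tendsto_cocompact_atTop hρ (hf x₀)).eventually_ge_atTop (f x₀)
  exact hf.continuous.continuousOn.exists_isMinOn' hs hx₀ (hlarge.filter_mono inf_le_left)

end Convexity

namespace LinearMap

variable {𝕜 E F : Type*} [RCLike 𝕜] [NormedAddCommGroup E] [InnerProductSpace 𝕜 E]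
  [NormedAddCommGroup F] [InnerProductSpace 𝕜 F] [FiniteDimensional 𝕜 E] [FiniteDimensional 𝕜 F]

theorem surjective_of_injective_adjoint {T : E →ₗ[𝕜] F} (h : Function.Injective T.adjoint) :
    Function.Surjective T := by
  rw [← range_eq_top, ← Submodule.orthogonal_eq_bot_iff, orthogonal_range, ker_eq_bot.mpr h]

end LinearMap

section LagrangeMultiplier

variable {E F : Type*} [NormedAddCommGroup E] [InnerProductSpace ℝ E]
  [NormedAddCommGroup F] [InnerProductSpace ℝ F] [FiniteDimensional ℝ E] [FiniteDimensional ℝ F]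

theorem LinearMap.injective_adjoint_of_isPositive_sub_smul {T : E →ₗ[ℝ] F} {c : ℝ} (hc : 0 < c)
    (h : (T ∘ₗ T.adjoint - c • 1).IsPositive) : Function.Injective T.adjoint := by
  rw [← ker_eq_bot, Submodule.eq_bot_iff]
  intro u hu
  have hpos := h.inner_nonneg_left u
  simp only [sub_apply, comp_apply, smul_apply, Module.End.one_apply, mem_ker.mp hu, map_zero,
    inner_sub_left, inner_smul_left, inner_zero_left, RCLike.conj_to_real,
    real_inner_self_eq_norm_sq] at hpos
  have hnorm : ‖u‖ ^ 2 ≤ 0 := by nlinarith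
  simpa using hnorm

theorem IsMinOn.exists_gradient_add_adjoint_eq_zero {f : E → ℝ} {T : E →ₗ[ℝ] F} {b : F} {x : E}
    (hmin : IsMinOn f {y | T y = b} x) (hxb : T x = b) (hfx : DifferentiableAt ℝ f x) :
    ∃ ξ, gradient f x + T.adjoint ξ = 0 := by
  have horth : -gradient f x ∈ (LinearMap.ker T)ᗮ := by
    refine (Submodule.mem_orthogonal' _ _).mpr fun v hv => ?_
    have hline : IsLocalMin (fun t : ℝ => f (x + t • v)) 0 :=
      Eventually.of_forall fun t => by
        simpa using hmin (by simp [LinearMap.mem_ker.mp hv, hxb] : T (x + t • v) = b)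
    have hpath : HasDerivAt (fun t : ℝ => x + t • v) v 0 := by
      simpa using ((hasDerivAt_id (0 : ℝ)).smul_const v).const_add x
    have hderiv : HasDerivAt (fun t : ℝ => f (x + t • v)) ⟪gradient f x, v⟫ 0 := by
      rw [inner_gradient_left]
      exact hfx.hasFDerivAt.comp_hasDerivAt_of_eq 0 hpath (by simp)
    rw [inner_neg_left, hline.hasDerivAt_eq_zero hderiv, neg_zero]
  rw [LinearMap.orthogonal_ker] at horth
  obtain ⟨ξ, hξ⟩ := horth
  exact ⟨ξ, by rw [hξ, add_neg_cancel]⟩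

theorem StrongConvexOn.lt_of_gradient_add_adjoint_eq_zero {f : E → ℝ} {ρ : ℝ}
    {T : E →ₗ[ℝ] F} {b : F} {x y : E} {ξ : F} (hsc : StrongConvexOn univ ρ f) (hρ : 0 < ρ)
    (hfx : DifferentiableAt ℝ f x) (hstat : gradient f x + T.adjoint ξ = 0)
    (hxb : T x = b) (hyb : T y = b) (hne : y ≠ x) : f x < f y := by
  have horth : ⟪gradient f x, y - x⟫ = 0 := by
    rw [eq_neg_of_add_eq_zero_left hstat, inner_neg_left, LinearMap.adjoint_inner_left, map_sub,
      hxb, hyb, sub_self, inner_zero_right, neg_zero]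
  have hgap : 0 < ρ / 2 * ‖y - x‖ ^ 2 := by
    have := sub_ne_zero.mpr hne
    positivity
  linarith [hsc.add_inner_gradient_add_le hfx y]

end LagrangeMultiplier

/-- For `f` continuously differentiable and `ρ`-strongly convex (`ρ > 0`),
and `A` with `a_min I_m ⪯ AAᵀ` (`a_min > 0`), there is a unique pair `(x⋆, ξ⋆)` with
`∇f(x⋆) + Aᵀξ⋆ = 0` and `Ax⋆ = b`; moreover `x⋆` is the unique global minimizer of `f`
over `{x : Ax = b}`. -/
theorem stmt8 {n m : ℕ}
    (f : EuclideanSpace ℝ (Fin n) → ℝ) (hf : ContDiff ℝ 1 f)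
    (ρ : ℝ) (hρ : 0 < ρ)
    (hsc : ConvexOn ℝ Set.univ (fun x : EuclideanSpace ℝ (Fin n) => f x - ρ / 2 * ‖x‖ ^ 2))
    (A : Matrix (Fin m) (Fin n) ℝ) (amin : ℝ) (hamin : 0 < amin)
    (hA : (A * Aᵀ - amin • 1).PosSemidef)
    (b : EuclideanSpace ℝ (Fin m)) :
    ∃ p : EuclideanSpace ℝ (Fin n) × EuclideanSpace ℝ (Fin m),
      (gradient f p.1 + Matrix.toEuclideanLin Aᵀ p.2 = 0 ∧
        Matrix.toEuclideanLin A p.1 = b) ∧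
      (∀ q : EuclideanSpace ℝ (Fin n) × EuclideanSpace ℝ (Fin m),
        gradient f q.1 + Matrix.toEuclideanLin Aᵀ q.2 = 0 →
        Matrix.toEuclideanLin A q.1 = b → q = p) ∧
      (∀ x : EuclideanSpace ℝ (Fin n),
        Matrix.toEuclideanLin A x = b → x ≠ p.1 → f p.1 < f x) := by
  set T := Matrix.toEuclideanLin A
  have hadj : Matrix.toEuclideanLin Aᵀ = T.adjoint := by
    rw [← Matrix.toEuclideanLin_conjTranspose_eq_adjoint,
      Matrix.conjTranspose_eq_transpose_of_trivial]
  have hpos : (T ∘ₗ T.adjoint - amin • 1).IsPositive := by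
    rw [← hadj, Module.End.one_eq_id]
    simpa [T, Matrix.toLpLin_mul] using Matrix.isPositive_toEuclideanLin_iff.mpr hA
  have hinj := LinearMap.injective_adjoint_of_isPositive_sub_smul hamin hpos
  have hfd : Differentiable ℝ f := hf.differentiable one_ne_zero
  have hsc' : StrongConvexOn univ ρ f := strongConvexOn_iff_convex.mpr hsc
  obtain ⟨x, hxb, hmin⟩ := hsc'.exists_isMinOn hρ hfd
    (isClosed_singleton.preimage T.continuous_of_finiteDimensional)
    (LinearMap.surjective_of_injective_adjoint hinj b)
  obtain ⟨ξ, hξ⟩ := hmin.exists_gradient_add_adjoint_eq_zero hxb (hfd x)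
  rw [hadj]
  have hstrict : ∀ y, T y = b → y ≠ x → f x < f y := fun y hyb hne =>
    hsc'.lt_of_gradient_add_adjoint_eq_zero hρ (hfd x) hξ hxb hyb hne
  refine ⟨(x, ξ), ⟨hξ, hxb⟩, fun ⟨y, η⟩ hη hyb => ?_, hstrict⟩
  obtain rfl : y = x := by
    by_contra hne
    exact (hstrict y hyb hne).not_gt
      (hsc'.lt_of_gradient_add_adjoint_eq_zero hρ (hfd y) hη hyb hxb (Ne.symm hne))
  exact Prod.ext rfl (hinj (add_left_cancel (hη.trans hξ.symm)))
end

section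
/- Let B, M ∈ ℝ^{n×n} be symmetric with M invertible, A ∈ ℝ^{m×n}, τ ≠ 0, α ∈ ℝ, c ∈ ℝ. Define S = [[ −M⁻¹B, −M⁻¹Aᵀ ], [ τ⁻¹A, 0 ]] and P = [[ M, αAᵀ ], [ αA, τ I_m ]]. Then the following block-matrix identity holds: −SᵀP − PS − 2cP = [[ 2B − 2τ⁻¹α AᵀA − 2cM, (αBM⁻¹ − 2cα I_n)Aᵀ ], [ A(αM⁻¹B − 2cα I_n), 2α A M⁻¹ Aᵀ − 2τc I_m ]]. -/
open Matrix

/-- Block-matrix identity: for symmetric `B, M` with `M` invertible,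
`A ∈ ℝ^{m×n}`, `τ ≠ 0`, `α, c ∈ ℝ`, with `S = [[−M⁻¹B, −M⁻¹Aᵀ],[τ⁻¹A, 0]]` and
`P = [[M, αAᵀ],[αA, τI]]`, one has
`−SᵀP − PS − 2cP = [[2B − 2τ⁻¹α AᵀA − 2cM, (αBM⁻¹ − 2cαI)Aᵀ],
                    [A(αM⁻¹B − 2cαI), 2α AM⁻¹Aᵀ − 2τcI]]`. -/
theorem stmt16 {n m : ℕ}
    (B M : Matrix (Fin n) (Fin n) ℝ) (hB : Bᵀ = B) (hMsymm : Mᵀ = M)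
    (hMinv : IsUnit M.det)
    (A : Matrix (Fin m) (Fin n) ℝ) (τ α c : ℝ) (hτ : τ ≠ 0)
    (S P : Matrix (Fin n ⊕ Fin m) (Fin n ⊕ Fin m) ℝ)
    (hS : S = Matrix.fromBlocks (-(M⁻¹ * B)) (-(M⁻¹ * Aᵀ)) (τ⁻¹ • A) 0)
    (hP : P = Matrix.fromBlocks M (α • Aᵀ) (α • A) (τ • 1)) :
    -(Sᵀ * P) - P * S - (2 * c) • P = Matrix.fromBlocks
      ((2 : ℝ) • B - (2 * τ⁻¹ * α) • (Aᵀ * A) - (2 * c) • M)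
      ((α • (B * M⁻¹) - (2 * c * α) • 1) * Aᵀ)
      (A * (α • (M⁻¹ * B) - (2 * c * α) • 1))
      ((2 * α) • (A * M⁻¹ * Aᵀ) - (2 * τ * c) • 1) := by
  subst hS hP
  have hMi : M⁻¹ᵀ = M⁻¹ := by rw [Matrix.transpose_nonsing_inv, hMsymm]
  have h1 : M⁻¹ * M = 1 := Matrix.nonsing_inv_mul M hMinv
  have h2 : M * M⁻¹ = 1 := Matrix.mul_nonsing_inv M hMinv
  have e1 : B * M⁻¹ * M = B := by rw [Matrix.mul_assoc, h1, Matrix.mul_one]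
  have e2 : M * (M⁻¹ * B) = B := by rw [← Matrix.mul_assoc, h2, Matrix.one_mul]
  have e3 : M * (M⁻¹ * Aᵀ) = Aᵀ := by rw [← Matrix.mul_assoc, h2, Matrix.one_mul]
  have e4 : A * M⁻¹ * M = A := by rw [Matrix.mul_assoc, h1, Matrix.mul_one]
  simp only [Matrix.fromBlocks_transpose, Matrix.fromBlocks_multiply,
    Matrix.fromBlocks_smul, Matrix.fromBlocks_neg,
    Matrix.transpose_neg, Matrix.transpose_mul, Matrix.transpose_smul, hMi, hB, hMsymm,
    sub_eq_add_neg, Matrix.fromBlocks_add, Matrix.transpose_transpose, Matrix.transpose_zero,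
    Matrix.mul_smul, Matrix.smul_mul, Matrix.mul_neg, Matrix.neg_mul,
    Matrix.mul_zero, Matrix.zero_mul, Matrix.mul_one, Matrix.one_mul,
    ← Matrix.mul_assoc, h1, h2, e1, e2, e3, e4, smul_smul, mul_inv_cancel₀ hτ, inv_mul_cancel₀ hτ, one_smul,
    Matrix.add_mul, Matrix.mul_add, Matrix.sub_mul, Matrix.mul_sub]
  refine Matrix.fromBlocks_inj.mpr ⟨?_, ?_, ?_, ?_⟩ <;> module
end

section
/- Let B, M ∈ ℝ^{n×n} be symmetric with M invertible, A ∈ ℝ^{m×n}, τ ≠ 0, α ∈ ℝ, c ∈ ℝ, and define S = [[ −M⁻¹B, −M⁻¹Aᵀ ], [ τ⁻¹A, 0 ]] and P = [[ M, αAᵀ ], [ αA, τ I_m ]]. If the 2n×2n matrix K = [[ 2B − 2τ⁻¹α AᵀA − 2cM, αBM⁻¹ − 2cα I_n ], [ αM⁻¹B − 2cα I_n, αM⁻¹ ]] is positive semidefinite and 2α A M⁻¹ Aᵀ − 2τc I_m ⪰ α A M⁻¹ Aᵀ, then SᵀP + PS + 2cP ⪯ 0, i.e., −SᵀP − PS −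 2cP is positive semidefinite. -/
/-!
Write `K = [[K₁₁, K₁₂], [K₂₁, K₂₂]]`. Using `PS = [[-B + ατ⁻¹AᵀA, -Aᵀ], [A - αAM⁻¹B, -αAM⁻¹Aᵀ]]`
and `SᵀP = (PS)ᵀ`, the matrix `-(SᵀP + PS + 2cP)` has blocks `K₁₁`, `K₁₂Aᵀ`, `AK₂₁` and
`2αAM⁻¹Aᵀ - 2τcI`. Hence it equals the congruence `diag(I, A) K diag(I, A)ᵀ`, which is positive
semidefinite, plus `diag(0, 2αAM⁻¹Aᵀ - 2τcI - AK₂₂Aᵀ)`, which is positive semidefinite by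
the second hypothesis since `AK₂₂Aᵀ = αAM⁻¹Aᵀ`.
-/

open Matrix

namespace Matrix

variable {ι κ R : Type*} [Fintype ι] [Fintype κ] [DecidableEq κ]
  [Ring R] [PartialOrder R] [StarRing R]

theorem PosSemidef.fromBlocks_zero_zero_zero {D : Matrix κ κ R} (hD : D.PosSemidef) :
    (fromBlocks (0 : Matrix ι ι R) 0 0 D).PosSemidef := by
  have h := hD.mul_mul_conjTranspose_same (fromRows (0 : Matrix ι κ R) (1 : Matrix κ κ R))
  rw [conjTranspose_fromRows_eq_fromCols_conjTranspose, fromRows_mul, fromRows_mul_fromCols] at h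
  simpa using h

theorem PosSemidef.fromBlocks_conj_of_posSemidef_sub [DecidableEq ι] [AddLeftMono R]
    {K₁₁ K₁₂ K₂₁ K₂₂ : Matrix ι ι R} (hK : (fromBlocks K₁₁ K₁₂ K₂₁ K₂₂).PosSemidef)
    (A : Matrix κ ι R) {D : Matrix κ κ R} (hD : (D - A * K₂₂ * Aᴴ).PosSemidef) :
    (fromBlocks K₁₁ (K₁₂ * Aᴴ) (A * K₂₁) D).PosSemidef := by
  have h := (hK.mul_mul_conjTranspose_same (fromBlocks 1 0 0 A)).add
    (hD.fromBlocks_zero_zero_zero (ι := ι))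
  simpa [fromBlocks_conjTranspose, fromBlocks_multiply, fromBlocks_add] using h

end Matrix

section Saddle

variable {ι κ 𝕜 : Type*} [Fintype ι] [Fintype κ] [DecidableEq ι] [DecidableEq κ] [Field 𝕜]
  {B M : Matrix ι ι 𝕜} {A : Matrix κ ι 𝕜} {τ : 𝕜} (α c : 𝕜)

theorem metric_mul_saddle_eq (hM : IsUnit M.det) (hτ : τ ≠ 0) :
    fromBlocks M (α • Aᵀ) (α • A) (τ • 1) * fromBlocks (-(M⁻¹ * B)) (-(M⁻¹ * Aᵀ)) (τ⁻¹ • A) 0 =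
      fromBlocks (-B + (α * τ⁻¹) • (Aᵀ * A)) (-Aᵀ) (A - α • (A * M⁻¹ * B))
        (-(α • (A * M⁻¹ * Aᵀ))) := by
  simp only [fromBlocks_multiply, Matrix.mul_neg, Matrix.mul_smul, Matrix.smul_mul, smul_smul,
    Matrix.mul_zero, ← Matrix.mul_assoc, mul_nonsing_inv _ hM, Matrix.one_mul,
    inv_mul_cancel₀ hτ, one_smul, add_zero]
  congr 1 <;> module

theorem neg_lyapunov_saddle_eq {S P : Matrix (ι ⊕ κ) (ι ⊕ κ) 𝕜} (hB : Bᵀ = B) (hMt : Mᵀ = M)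
    (hM : IsUnit M.det) (hτ : τ ≠ 0)
    (hS : S = fromBlocks (-(M⁻¹ * B)) (-(M⁻¹ * Aᵀ)) (τ⁻¹ • A) 0)
    (hP : P = fromBlocks M (α • Aᵀ) (α • A) (τ • 1)) :
    -(Sᵀ * P) - P * S - (2 * c) • P =
      fromBlocks ((2 : 𝕜) • B - (2 * τ⁻¹ * α) • (Aᵀ * A) - (2 * c) • M)
        ((α • (B * M⁻¹) - (2 * c * α) • 1) * Aᵀ) (A * (α • (M⁻¹ * B) - (2 * c * α) • 1))
        ((2 * α) • (A * M⁻¹ * Aᵀ) - (2 * τ * c) • 1) := by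
  have hPt : Pᵀ = P := by simp [hP, fromBlocks_transpose, hMt]
  have hMinvt : M⁻¹ᵀ = M⁻¹ := by rw [transpose_nonsing_inv, hMt]
  rw [← hPt, ← transpose_mul, hPt, hS, hP, metric_mul_saddle_eq α hM hτ]
  simp only [fromBlocks_transpose, fromBlocks_smul, fromBlocks_neg, sub_eq_add_neg,
    fromBlocks_add, transpose_neg, transpose_add, transpose_smul, transpose_mul,
    transpose_transpose, hB, hMinvt, Matrix.add_mul, Matrix.mul_add, Matrix.smul_mul,
    Matrix.mul_smul, Matrix.neg_mul, Matrix.mul_neg, Matrix.one_mul, Matrix.mul_one,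
    Matrix.mul_assoc]
  congr 1 <;> module

end Saddle

/-- With `S`, `P` as in the scaled saddle-matrix setting, if the `2n×2n`
matrix `K = [[2B − 2τ⁻¹α AᵀA − 2cM, αBM⁻¹ − 2cαI],[αM⁻¹B − 2cαI, αM⁻¹]]` is positive
semidefinite and `2α AM⁻¹Aᵀ − 2τcI ⪰ α AM⁻¹Aᵀ`, then `SᵀP + PS + 2cP ⪯ 0`, i.e.
`−SᵀP − PS − 2cP` is positive semidefinite. -/
theorem stmt17 {n m : ℕ}
    (B M : Matrix (Fin n) (Fin n) ℝ) (hB : Bᵀ = B) (hMsymm : Mᵀ = M)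
    (hMinv : IsUnit M.det)
    (A : Matrix (Fin m) (Fin n) ℝ) (τ α c : ℝ) (hτ : τ ≠ 0)
    (S P : Matrix (Fin n ⊕ Fin m) (Fin n ⊕ Fin m) ℝ)
    (hS : S = Matrix.fromBlocks (-(M⁻¹ * B)) (-(M⁻¹ * Aᵀ)) (τ⁻¹ • A) 0)
    (hP : P = Matrix.fromBlocks M (α • Aᵀ) (α • A) (τ • 1))
    (K : Matrix (Fin n ⊕ Fin n) (Fin n ⊕ Fin n) ℝ)
    (hK : K = Matrix.fromBlocks
      ((2 : ℝ) • B - (2 * τ⁻¹ * α) • (Aᵀ * A) - (2 * c) • M)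
      (α • (B * M⁻¹) - (2 * c * α) • 1)
      (α • (M⁻¹ * B) - (2 * c * α) • 1)
      (α • M⁻¹))
    (hKpsd : K.PosSemidef)
    (h22 : ((2 * α) • (A * M⁻¹ * Aᵀ) - (2 * τ * c) • 1
      - α • (A * M⁻¹ * Aᵀ)).PosSemidef) :
    (-(Sᵀ * P) - P * S - (2 * c) • P).PosSemidef := by
  subst hK
  rw [neg_lyapunov_saddle_eq α c hB hMsymm hMinv hτ hS hP]
  have hD : ((2 * α) • (A * M⁻¹ * Aᵀ) - (2 * τ * c) • 1 - A * (α • M⁻¹) * Aᴴ).PosSemidef := by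
    simpa only [Matrix.mul_smul, Matrix.smul_mul, conjTranspose_eq_transpose_of_trivial] using h22
  simpa only [conjTranspose_eq_transpose_of_trivial] using
    hKpsd.fromBlocks_conj_of_posSemidef_sub A hD
end
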